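/- arXiv:1511.02176 — 2 statements merged into one kernel-verified Lean document; each statement's English description precedes it below -/
import Mathlib

section
/- Let X₁, X₂, …, X_d be independent Gaussian random variables, each with distribution N(0, σ²) where σ > 0, and let d ≥ 2 be an integer. Set C = √(2 − 2·ln ln d / ln d). Then Pr[max_{1 ≤ i ≤ d} X_i ≥ C·σ·√(ln d)] ≥ 1 − exp(−√(ln d)/6.35). -/
/-!
Birnbaum's bound `K(x) = (√(x² + 4) - x) / 2 · exp (-x² / 2) ≤ ∫ₓ^∞ exp (-t² / 2) dt` for `x ≥ 0`
follows from the fundamental theorem of calculus on `(x, ∞)`: `K` tends to `0` and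
`0 ≤ -K' ≤ exp (-t² / 2)`. For `z = C √(ln d)` we have `exp (-z² / 2) = ln d / d`, so the tail
probability `p = P(N(0, σ²) ≥ σ z)` satisfies
`d p ≥ d K(z) / √(2π) = ln d · (√(z² + 4) - z) / (2 √(2π)) ≥ (2 / 5) √(ln d) / √(2π)`,
and `(2 / 5) / √(2π) ≥ 1 / 6.35`. By independence `P(max Xᵢ < σ z) = (1 - p)ᵈ ≤ exp (-d p)`.
-/

open MeasureTheory ProbabilityTheory Real Set Filter Topology

noncomputable def birnbaum (x : ℝ) : ℝ := (√(x ^ 2 + 4) - x) / 2 * exp (-x ^ 2 / 2)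

lemma hasDerivAt_birnbaum (x : ℝ) :
    HasDerivAt birnbaum
      (-((√(x ^ 2 + 4) - x) * (1 + x * √(x ^ 2 + 4)) / (2 * √(x ^ 2 + 4)) * exp (-x ^ 2 / 2)))
      x := by
  have hsqrt : HasDerivAt (fun x : ℝ => √(x ^ 2 + 4)) (x / √(x ^ 2 + 4)) x := by
    convert ((hasDerivAt_pow 2 x).add_const 4).sqrt (by positivity) using 1
    field_simp
    ring
  have hexp : HasDerivAt (fun x : ℝ => exp (-x ^ 2 / 2)) (-x * exp (-x ^ 2 / 2)) x := by
    have h : HasDerivAt (fun x : ℝ => -x ^ 2 / 2) (-x) x :=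
      (((hasDerivAt_pow 2 x).neg).div_const 2).congr_deriv (by ring)
    simpa [mul_comm] using h.exp
  refine (((hsqrt.sub (hasDerivAt_id x)).div_const 2).mul hexp).congr_deriv ?_
  simp only [Pi.sub_apply, id]
  field_simp
  ring

lemma birnbaum_deriv_coeff_nonneg {x : ℝ} (hx : 0 ≤ x) :
    0 ≤ (√(x ^ 2 + 4) - x) * (1 + x * √(x ^ 2 + 4)) / (2 * √(x ^ 2 + 4)) := by
  have hxs : x ≤ √(x ^ 2 + 4) := le_sqrt_of_sq_le (by linarith)
  have : 0 ≤ √(x ^ 2 + 4) - x := by linarith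
  positivity

-- Since `(s - x)(s + x) = 4` for `s = √(x² + 4)`, this amounts to `x s ≤ x² + 2`.
lemma birnbaum_deriv_coeff_le_one (x : ℝ) :
    (√(x ^ 2 + 4) - x) * (1 + x * √(x ^ 2 + 4)) / (2 * √(x ^ 2 + 4)) ≤ 1 := by
  set s := √(x ^ 2 + 4)
  have hs : 0 < s := by positivity
  have hs2 : s ^ 2 = x ^ 2 + 4 := sq_sqrt (by positivity)
  have hxs : x * s ≤ x ^ 2 + 2 := by
    nlinarith [sq_nonneg (x * s - (x ^ 2 + 2)), sq_nonneg (x * s + (x ^ 2 + 2))]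
  rw [div_le_one (by positivity)]
  nlinarith

lemma birnbaum_nonneg (x : ℝ) : 0 ≤ birnbaum x := by
  have hxs : x ≤ √(x ^ 2 + 4) := le_sqrt_of_sq_le (by linarith)
  have : 0 ≤ √(x ^ 2 + 4) - x := by linarith
  unfold birnbaum
  positivity

lemma birnbaum_le_exp {x : ℝ} (hx : 0 ≤ x) : birnbaum x ≤ exp (-x ^ 2 / 2) := by
  have hs : √(x ^ 2 + 4) ≤ x + 2 := sqrt_le_iff.mpr ⟨by linarith, by nlinarith⟩
  exact mul_le_of_le_one_left (exp_pos _).le (by linarith)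

lemma tendsto_birnbaum_atTop : Tendsto birnbaum atTop (𝓝 0) := by
  have hexp : Tendsto (fun x : ℝ => exp (-x ^ 2 / 2)) atTop (𝓝 0) := by
    refine tendsto_exp_comp_nhds_zero.mpr ?_
    have h : Tendsto (fun x : ℝ => x ^ 2 / 2) atTop atTop :=
      (tendsto_pow_atTop two_ne_zero).atTop_div_const two_pos
    simpa only [Function.comp_def, neg_div] using tendsto_neg_atTop_atBot.comp h
  refine tendsto_of_tendsto_of_tendsto_of_le_of_le' tendsto_const_nhds hexp
    (Eventually.of_forall birnbaum_nonneg) ?_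
  filter_upwards [eventually_ge_atTop 0] with x hx using birnbaum_le_exp hx

lemma birnbaum_div_le_gaussianReal_Ici {z : ℝ} (hz : 0 ≤ z) :
    birnbaum z / √(2 * π) ≤ (gaussianReal 0 1).real (Ici z) := by
  set c : ℝ → ℝ := fun x => (√(x ^ 2 + 4) - x) * (1 + x * √(x ^ 2 + 4)) / (2 * √(x ^ 2 + 4))
  have hderiv : ∀ x ∈ Ici z, HasDerivAt birnbaum (-(c x * exp (-x ^ 2 / 2))) x :=
    fun x _ => hasDerivAt_birnbaum x
  have hnonpos : ∀ x ∈ Ioi z, -(c x * exp (-x ^ 2 / 2)) ≤ 0 := fun x hx =>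
    neg_nonpos.mpr (mul_nonneg (birnbaum_deriv_coeff_nonneg (hz.trans hx.out.le)) (exp_pos _).le)
  have hFTC : ∫ x in Ioi z, -(c x * exp (-x ^ 2 / 2)) = 0 - birnbaum z :=
    integral_Ioi_of_hasDerivAt_of_nonpos' hderiv hnonpos tendsto_birnbaum_atTop
  have hint : IntegrableOn (fun x => c x * exp (-x ^ 2 / 2)) (Ioi z) := by
    simpa using (integrableOn_Ioi_deriv_of_nonpos' hderiv hnonpos tendsto_birnbaum_atTop).neg
  rw [measureReal_def, gaussianReal_apply_eq_integral 0 one_ne_zero,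
    ENNReal.toReal_ofReal (setIntegral_nonneg measurableSet_Ici
      fun x _ => gaussianPDFReal_nonneg 0 1 x), integral_Ici_eq_integral_Ioi]
  calc birnbaum z / √(2 * π) = ∫ x in Ioi z, c x * exp (-x ^ 2 / 2) / √(2 * π) := by
        rw [integral_div, ← neg_neg (∫ x in Ioi z, _), ← integral_neg, hFTC]
        simp
    _ ≤ ∫ x in Ioi z, gaussianPDFReal 0 1 x := by
        refine setIntegral_mono_on (hint.div_const _) (integrable_gaussianPDFReal 0 1).integrableOn
          measurableSet_Ioi fun x _ => ?_
        simp only [gaussianPDFReal, NNReal.coe_one, mul_one, sub_zero]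
        rw [div_eq_inv_mul]
        exact mul_le_mul_of_nonneg_left
          (mul_le_of_le_one_left (exp_pos _).le (birnbaum_deriv_coeff_le_one x)) (by positivity)

lemma gaussianReal_real_Ici_const_mul {σ : ℝ} (hσ : 0 < σ) (z : ℝ) :
    (gaussianReal 0 ⟨σ ^ 2, sq_nonneg σ⟩).real (Ici (σ * z)) = (gaussianReal 0 1).real (Ici z) := by
  have hmap : (gaussianReal 0 1).map (σ * ·) = gaussianReal 0 ⟨σ ^ 2, sq_nonneg σ⟩ := by
    rw [gaussianReal_map_const_mul, mul_zero, mul_one]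
    rfl
  have hpre : (σ * ·) ⁻¹' Ici (σ * z) = Ici z := by
    ext x
    simp [mul_le_mul_iff_right₀ hσ]
  rw [← hmap, map_measureReal_apply (measurable_const_mul σ) measurableSet_Ici, hpre]

lemma le_ciSup_iff_of_finite {α ι : Type*} [ConditionallyCompleteLinearOrder α] [Finite ι]
    [Nonempty ι] {f : ι → α} {a : α} : a ≤ ⨆ i, f i ↔ ∃ i, a ≤ f i := by
  refine ⟨fun h => ?_, fun ⟨i, hi⟩ => hi.trans (Finite.le_ciSup f i)⟩
  obtain ⟨j, hj⟩ := exists_eq_ciSup_of_finite (f := f)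
  exact ⟨j, hj ▸ h⟩

section IIDMaximum

variable {Ω ι : Type*} [MeasurableSpace Ω] {μ : Measure Ω} [IsProbabilityMeasure μ]
  [Fintype ι] [Nonempty ι] {X : ι → Ω → ℝ} {ν : Measure ℝ}

lemma measureReal_le_iSup_eq_one_sub_pow (hX : ∀ i, Measurable (X i)) (hindep : iIndepFun X μ)
    (hlaw : ∀ i, μ.map (X i) = ν) (t : ℝ) :
    μ.real {ω | t ≤ ⨆ i, X i ω} = 1 - ν.real (Iio t) ^ Fintype.card ι := by
  have hset : {ω | t ≤ ⨆ i, X i ω} = (⋂ i, X i ⁻¹' Iio t)ᶜ := by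
    ext ω
    simp [le_ciSup_iff_of_finite]
  rw [hset, probReal_compl_eq_one_sub (MeasurableSet.iInter fun i => hX i measurableSet_Iio),
    measureReal_def, hindep.meas_iInter fun i => ⟨Iio t, measurableSet_Iio, rfl⟩,
    ENNReal.toReal_prod]
  simp_rw [← measureReal_def, ← map_measureReal_apply (hX _) measurableSet_Iio, hlaw]
  simp

lemma one_sub_exp_le_measureReal_le_iSup (hX : ∀ i, Measurable (X i))
    (hindep : iIndepFun X μ) (hlaw : ∀ i, μ.map (X i) = ν) (t : ℝ) :
    1 - exp (-(Fintype.card ι * ν.real (Ici t))) ≤ μ.real {ω | t ≤ ⨆ i, X i ω} := by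
  have : IsProbabilityMeasure ν :=
    hlaw (Classical.arbitrary ι) ▸ Measure.isProbabilityMeasure_map (hX _).aemeasurable
  rw [measureReal_le_iSup_eq_one_sub_pow hX hindep hlaw, ← compl_Ici,
    probReal_compl_eq_one_sub measurableSet_Ici]
  set p := ν.real (Ici t)
  have hpow : (1 - p) ^ Fintype.card ι ≤ exp (-(Fintype.card ι * p)) :=
    calc (1 - p) ^ Fintype.card ι ≤ exp (-p) ^ Fintype.card ι :=
          pow_le_pow_left₀ (sub_nonneg.mpr measureReal_le_one) (one_sub_le_exp_neg p) _
      _ = exp (-(Fintype.card ι * p)) := by rw [← exp_nat_mul]; ring_nf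
  linarith

end IIDMaximum

-- The threshold `C √(ln d)` of the standardized variables, as a function of `L = ln d`.
noncomputable def threshold (L : ℝ) : ℝ := √(2 - 2 * log L / L) * √L

lemma threshold_nonneg (L : ℝ) : 0 ≤ threshold L := by
  unfold threshold
  positivity

lemma threshold_sq {L : ℝ} (hL : 0 < L) : threshold L ^ 2 = 2 * L - 2 * log L := by
  have : 0 ≤ 2 - 2 * log L / L := by
    rw [sub_nonneg, div_le_iff₀ hL]
    linarith [log_le_sub_one_of_pos hL]
  rw [threshold, mul_pow, sq_sqrt this, sq_sqrt hL.le]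
  field_simp

lemma two_fifths_sqrt_le {L : ℝ} (hL : log 2 ≤ L) :
    2 / 5 * √L ≤ L * ((√(threshold L ^ 2 + 4) - threshold L) / 2) := by
  have hL0 : 0.6931471803 < L := lt_of_lt_of_le log_two_gt_d9 hL
  set z := threshold L
  have hz : 0 ≤ z := threshold_nonneg L
  have hz2 : z ^ 2 = 2 * L - 2 * log L := threshold_sq (by linarith)
  set s := √(z ^ 2 + 4)
  have hs2 : s ^ 2 = z ^ 2 + 4 := sq_sqrt (by positivity)
  have hs0 : 0 ≤ s := sqrt_nonneg _
  have hsL : √L ^ 2 = L := sq_sqrt (by linarith)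
  have hlog : 1 - L⁻¹ ≤ log L := one_sub_inv_le_log_of_pos (by linarith)
  -- `(s + z)² ≤ 2 (s² + z²) = 4 z² + 8 ≤ 8 L + 8 / L ≤ 25 L`, the last step because `L ≥ log 2`.
  have hsum : s + z ≤ 5 * √L := by
    have hLinv : L⁻¹ ≤ 17 / 8 * L := by
      rw [inv_le_iff_one_le_mul₀ (by linarith)]
      nlinarith
    have hsq : (s + z) ^ 2 ≤ (5 * √L) ^ 2 := by
      nlinarith [sq_nonneg (s - z)]
    exact (pow_le_pow_iff_left₀ (by positivity) (by positivity) two_ne_zero).mp hsq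
  have hprod : (s - z) * (s + z) = 4 := by nlinarith
  have hpos : 0 < s + z := by nlinarith
  calc 2 / 5 * √L = L * (2 / (5 * √L)) := by field_simp; rw [hsL]
    _ ≤ L * (2 / (s + z)) := by gcongr
    _ = L * ((s - z) / 2) := by congr 1; field_simp; linarith

lemma sqrt_log_div_le_mul_birnbaum {d : ℕ} (hd : 2 ≤ d) :
    √(log d) / 6.35 ≤ d * (birnbaum (threshold (log d)) / √(2 * π)) := by
  set L := log d
  have hd0 : (0 : ℝ) < d := by positivity
  have hL : log 2 ≤ L := log_le_log two_pos (by exact_mod_cast hd)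
  have hL0 : 0 < L := (log_pos one_lt_two).trans_le hL
  set z := threshold L
  have hexp : exp (-z ^ 2 / 2) = L / d := by
    rw [threshold_sq hL0, show -(2 * L - 2 * log L) / 2 = log L - L by ring, exp_sub,
      exp_log hL0, exp_log hd0]
  have hkey : d * birnbaum z = L * ((√(z ^ 2 + 4) - z) / 2) := by
    rw [birnbaum, hexp]
    field_simp
  have hpi : √(2 * π) ≤ 2.54 := sqrt_le_iff.mpr ⟨by norm_num, by nlinarith [pi_lt_d2]⟩
  have hpi0 : 0 < √(2 * π) := by positivity
  calc √L / 6.35 ≤ 2 / 5 * √L / √(2 * π) := by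
        rw [le_div_iff₀ hpi0]
        have := mul_le_mul_of_nonneg_left hpi (sqrt_nonneg L)
        norm_num at this ⊢
        linarith
    _ ≤ L * ((√(z ^ 2 + 4) - z) / 2) / √(2 * π) :=
        div_le_div_of_nonneg_right (two_fifths_sqrt_le hL) hpi0.le
    _ = d * (birnbaum z / √(2 * π)) := by rw [← hkey]; ring

/-- For `d ≥ 2` independent `N(0, σ²)` Gaussians and
`C = √(2 − 2 ln ln d / ln d)`, the probability that the maximum exceeds
`C·σ·√(ln d)` is at least `1 − exp(−√(ln d)/6.35)`. -/
theorem max_gaussians_threshold_probability {Ω : Type*} [MeasurableSpace Ω]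
    (μ : Measure Ω) [IsProbabilityMeasure μ]
    (σ : ℝ) (hσ : 0 < σ) (d : ℕ) (hd : 2 ≤ d)
    (X : Fin d → Ω → ℝ) (hX : ∀ i, Measurable (X i))
    (hlaw : ∀ i, μ.map (X i) = gaussianReal 0 ⟨σ ^ 2, sq_nonneg σ⟩)
    (hindep : iIndepFun X μ)
    (C : ℝ) (hC : C = Real.sqrt (2 - 2 * Real.log (Real.log d) / Real.log d)) :
    (μ {ω | C * σ * Real.sqrt (Real.log d) ≤ ⨆ i, X i ω}).toReal ≥
      1 - Real.exp (-Real.sqrt (Real.log d) / 6.35) := by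
  have : Nonempty (Fin d) := ⟨⟨0, by omega⟩⟩
  have hthreshold : C * σ * √(log d) = σ * threshold (log d) := by rw [hC, threshold]; ring
  have htail : birnbaum (threshold (log d)) / √(2 * π) ≤
      (gaussianReal 0 ⟨σ ^ 2, sq_nonneg σ⟩).real (Ici (C * σ * √(log d))) := by
    rw [hthreshold, gaussianReal_real_Ici_const_mul hσ]
    exact birnbaum_div_le_gaussianReal_Ici (threshold_nonneg _)
  have hmax := one_sub_exp_le_measureReal_le_iSup hX hindep hlaw (C * σ * √(log d))
  rw [Fintype.card_fin] at hmax
  calc 1 - exp (-√(log d) / 6.35)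
      ≤ 1 - exp (-(d * (gaussianReal 0 ⟨σ ^ 2, sq_nonneg σ⟩).real (Ici (C * σ * √(log d))))) := by
        gcongr
        rw [neg_div, neg_le_neg_iff]
        exact (sqrt_log_div_le_mul_birnbaum hd).trans (by gcongr)
    _ ≤ _ := hmax
end

section
/- If X₁, X₂, …, X_d are i.i.d. Gaussian random variables with distribution N(0, σ²) where σ > 0, then the ratio E[max_{1 ≤ i ≤ d} X_i] / (σ·√(2·ln d)) tends to 1 as d → ∞. -/
/-!
Write `s_d = σ √(2 log d)` and `M_d = max_{i < d} X_i`.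

Upper bound: by Jensen,
`exp (t E M_d) ≤ E exp (t M_d) ≤ ∑ E exp (t X_i) = d exp (σ² t² / 2)`, and the optimal
`t = √(2 log d) / σ` gives `E M_d ≤ s_d`.

Lower bound: `M_d ≥ a 1{M_d ≥ a} - |X_0|`, and by independence `P (M_d < a) = P (X_0 < a) ^ d`.
The density at `s_d` is `1 / (d √(2πσ²))`, so for `c < 1` the mass of `[c s_d, s_d]` gives
`d P (X_0 ≥ c s_d) ≥ (1 - c) s_d / √(2πσ²) → ∞`. Hence `P (M_d ≥ c s_d) → 1` and
`liminf E M_d / s_d ≥ c`.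
-/

open MeasureTheory ProbabilityTheory Real Filter Set Topology
open scoped NNReal

lemma hasSubgaussianMGF_of_map_eq_gaussianReal {Ω : Type*} [MeasurableSpace Ω] {μ : Measure Ω}
    {Y : Ω → ℝ} {v : ℝ≥0} (hY : AEMeasurable Y μ) (hlaw : μ.map Y = gaussianReal 0 v) :
    HasSubgaussianMGF Y v μ := by
  rw [← HasSubgaussianMGF.id_map_iff hY, hlaw]
  exact ⟨fun t => integrable_exp_mul_gaussianReal t, fun t => by simp [mgf_id_gaussianReal]⟩

lemma gaussianPDFReal_antitoneOn (m : ℝ) (v : ℝ≥0) :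
    AntitoneOn (gaussianPDFReal m v) (Ici m) := by
  intro x hx y _ hxy
  simp only [gaussianPDFReal]
  gcongr
  exact sub_nonneg.2 hx

lemma mul_gaussianPDFReal_le_gaussianReal_Icc {m : ℝ} {v : ℝ≥0} (hv : v ≠ 0) {a b : ℝ}
    (hma : m ≤ a) (hab : a ≤ b) :
    (b - a) * gaussianPDFReal m v b ≤ (gaussianReal m v).real (Icc a b) := by
  rw [measureReal_def, gaussianReal_apply_eq_integral m hv,
    ENNReal.toReal_ofReal
      (setIntegral_nonneg measurableSet_Icc fun x _ => gaussianPDFReal_nonneg m v x),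
    ← volume_real_Icc_of_le hab, ← smul_eq_mul, ← setIntegral_const]
  exact setIntegral_mono_on (integrableOn_const measure_Icc_lt_top.ne)
    (integrable_gaussianPDFReal m v).integrableOn measurableSet_Icc
    fun x hx => gaussianPDFReal_antitoneOn m v (hma.trans hx.1) (hma.trans hab) hx.2

section Maximum

variable {ι : Type*} [Fintype ι] [Nonempty ι]

lemma abs_ciSup_le_sum_abs (f : ι → ℝ) : |⨆ i, f i| ≤ ∑ i, |f i| := by
  obtain ⟨j, hj⟩ := exists_eq_ciSup_of_finite (f := f)
  rw [← hj]
  exact Finset.single_le_sum (f := fun i => |f i|) (fun i _ => abs_nonneg _)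
    (Finset.mem_univ j)

variable {Ω : Type*} [MeasurableSpace Ω] {μ : Measure Ω} {X : ι → Ω → ℝ}

lemma integrable_iSup (hX : ∀ i, Integrable (X i) μ) : Integrable (fun ω => ⨆ i, X i ω) μ := by
  refine (integrable_finsetSum Finset.univ fun i _ => (hX i).abs).mono'
    (AEMeasurable.iSup fun i => (hX i).aemeasurable).aestronglyMeasurable
    (ae_of_all _ fun ω => ?_)
  simpa only [Real.norm_eq_abs, Finset.sum_apply] using abs_ciSup_le_sum_abs fun i => X i ω

lemma mul_measureReal_le_integral_iSup_add [IsFiniteMeasure μ] (hXm : ∀ i, Measurable (X i))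
    (hX : ∀ i, Integrable (X i) μ) (i₀ : ι) (a : ℝ) :
    a * μ.real {ω | a ≤ ⨆ i, X i ω} ≤ ∫ ω, ⨆ i, X i ω ∂μ + ∫ ω, |X i₀ ω| ∂μ := by
  set s := {ω | a ≤ ⨆ i, X i ω}
  have hs : MeasurableSet s := measurableSet_le measurable_const (Measurable.iSup hXm)
  have hpt : ∀ ω, s.indicator (fun _ => a) ω ≤ (⨆ i, X i ω) + |X i₀ ω| := fun ω => by
    have hle : X i₀ ω ≤ ⨆ i, X i ω := le_ciSup (Finite.bddAbove_range fun i => X i ω) i₀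
    by_cases hω : ω ∈ s
    · rw [indicator_of_mem hω]
      linarith [abs_nonneg (X i₀ ω), show a ≤ ⨆ i, X i ω from hω]
    · rw [indicator_of_notMem hω]
      linarith [neg_abs_le (X i₀ ω)]
  have hint := integral_mono ((integrable_const a).indicator hs)
    ((integrable_iSup hX).add (hX i₀).abs) hpt
  rwa [integral_indicator hs, setIntegral_const, smul_eq_mul, mul_comm,
    integral_add' (integrable_iSup hX) (hX i₀).abs] at hint

lemma measureReal_iSup_lt_eq_pow {ν : Measure ℝ} (hXm : ∀ i, Measurable (X i))
    (hindep : iIndepFun X μ) (hlaw : ∀ i, μ.map (X i) = ν) (a : ℝ) :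
    μ.real {ω | ⨆ i, X i ω < a} = ν.real (Iio a) ^ Fintype.card ι := by
  have hset : {ω | ⨆ i, X i ω < a} = ⋂ i, X i ⁻¹' Iio a := by
    ext ω
    simp only [mem_ofPred_eq, mem_iInter, mem_preimage, mem_Iio]
    obtain ⟨j, hj⟩ := exists_eq_ciSup_of_finite (f := fun i => X i ω)
    exact ⟨fun h i => (le_ciSup (Finite.bddAbove_range fun i => X i ω) i).trans_lt h,
      fun h => hj ▸ h j⟩
  rw [hset, measureReal_def, hindep.meas_iInter fun i => ⟨Iio a, measurableSet_Iio, rfl⟩]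
  simp_rw [← Measure.map_apply (hXm _) measurableSet_Iio, hlaw]
  rw [Finset.prod_const, Finset.card_univ, ENNReal.toReal_pow, measureReal_def]

variable [IsProbabilityMeasure μ]

lemma mul_one_sub_pow_le_integral_iSup_add {ν : Measure ℝ} (hXm : ∀ i, Measurable (X i))
    (hX : ∀ i, Integrable (X i) μ) (hindep : iIndepFun X μ) (hlaw : ∀ i, μ.map (X i) = ν)
    (i₀ : ι) (a : ℝ) :
    a * (1 - ν.real (Iio a) ^ Fintype.card ι) ≤ ∫ ω, ⨆ i, X i ω ∂μ + ∫ ω, |X i₀ ω| ∂μ := by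
  have hcompl : {ω | a ≤ ⨆ i, X i ω} = {ω | ⨆ i, X i ω < a}ᶜ := by ext; simp
  rw [← measureReal_iSup_lt_eq_pow hXm hindep hlaw, ← probReal_compl_eq_one_sub
    (measurableSet_lt (Measurable.iSup hXm) measurable_const), ← hcompl]
  exact mul_measureReal_le_integral_iSup_add hXm hX i₀ a

lemma mul_integral_iSup_le_log_sum_mgf {t : ℝ} (hX : ∀ i, Integrable (X i) μ)
    (hexp : ∀ i, Integrable (fun ω => exp (t * X i ω)) μ) :
    t * ∫ ω, ⨆ i, X i ω ∂μ ≤ log (∑ i, mgf (X i) μ t) := by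
  have hle : ∀ ω, exp (t * ⨆ i, X i ω) ≤ ∑ i, exp (t * X i ω) := fun ω => by
    obtain ⟨j, hj⟩ := exists_eq_ciSup_of_finite (f := fun i => X i ω)
    rw [← hj]
    exact Finset.single_le_sum (f := fun i => exp (t * X i ω)) (fun i _ => (exp_pos _).le)
      (Finset.mem_univ j)
  have hsum : Integrable (fun ω => ∑ i, exp (t * X i ω)) μ :=
    integrable_finsetSum _ fun i _ => hexp i
  have hint : Integrable (fun ω => exp (t * ⨆ i, X i ω)) μ :=
    hsum.mono'
      ((AEMeasurable.iSup fun i => (hX i).aemeasurable).const_mul t).exp.aestronglyMeasurable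
      (ae_of_all _ fun ω => by simpa only [Real.norm_eq_abs, abs_exp] using hle ω)
  rw [le_log_iff_exp_le (Finset.sum_pos (fun i _ => mgf_pos (hexp i)) Finset.univ_nonempty),
    ← integral_const_mul]
  calc exp (∫ ω, t * ⨆ i, X i ω ∂μ) ≤ ∫ ω, exp (t * ⨆ i, X i ω) ∂μ :=
        convexOn_exp.map_integral_le continuous_exp.continuousOn isClosed_univ
          (ae_of_all _ fun _ => mem_univ _) ((integrable_iSup hX).const_mul t) hint
    _ ≤ ∫ ω, ∑ i, exp (t * X i ω) ∂μ := integral_mono hint hsum hle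
    _ = ∑ i, mgf (X i) μ t := integral_finsetSum _ fun i _ => hexp i

lemma integral_iSup_le_of_hasSubgaussianMGF {c : ℝ≥0} (hc : 0 < c)
    (hι : 1 < Fintype.card ι) (hX : ∀ i, HasSubgaussianMGF (X i) c μ) :
    ∫ ω, ⨆ i, X i ω ∂μ ≤ √(2 * c * log (Fintype.card ι)) := by
  set L := log (Fintype.card ι)
  have hL : 0 < L := log_pos (by exact_mod_cast hι)
  set S := √(2 * c * L)
  have hS : 0 < S := by positivity
  have hS2 : S ^ 2 = 2 * c * L := sq_sqrt (by positivity)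
  -- `t = 2L / S` balances the two terms of `log (card ι) + c t² / 2`
  set t := 2 * L / S
  have hlog : log (∑ i, mgf (X i) μ t) ≤ 2 * L := calc
    log (∑ i, mgf (X i) μ t) ≤ log (∑ _i : ι, exp (c * t ^ 2 / 2)) :=
      log_le_log (Finset.sum_pos (fun i _ => mgf_pos ((hX i).integrable_exp_mul t))
        Finset.univ_nonempty) (Finset.sum_le_sum fun i _ => (hX i).mgf_le t)
    _ = 2 * L := by
      have hct : c * t ^ 2 / 2 = L := by
        rw [div_pow, hS2]
        field_simp
      rw [Finset.sum_const, Finset.card_univ, nsmul_eq_mul,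
        log_mul (by positivity) (exp_pos _).ne', log_exp, hct]
      ring
  have key := (mul_integral_iSup_le_log_sum_mgf (fun i => (hX i).integrable)
    fun i => (hX i).integrable_exp_mul t).trans hlog
  rwa [mul_comm, ← le_div_iff₀ (by positivity), div_div_cancel₀ (by positivity)] at key

end Maximum

lemma tendsto_pow_zero_of_tendsto_mul_one_sub_atTop {q : ℕ → ℝ} (hq : ∀ n, 0 ≤ q n)
    (h : Tendsto (fun n : ℕ => n * (1 - q n)) atTop atTop) :
    Tendsto (fun n => q n ^ n) atTop (𝓝 0) := by
  have hle : ∀ n, q n ^ n ≤ exp (-(n * (1 - q n))) := fun n => calc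
    q n ^ n ≤ exp (-(1 - q n)) ^ n :=
      pow_le_pow_left₀ (hq n) (by linarith [add_one_le_exp (-(1 - q n))]) n
    _ = exp (-(n * (1 - q n))) := by rw [← exp_nat_mul]; ring_nf
  exact squeeze_zero (fun n => pow_nonneg (hq n) n) hle
    (tendsto_exp_atBot.comp (tendsto_neg_atTop_atBot.comp h))

lemma tendsto_mul_sqrt_two_mul_log_atTop {σ : ℝ} (hσ : 0 < σ) :
    Tendsto (fun d : ℕ => σ * √(2 * log d)) atTop atTop :=
  (tendsto_sqrt_atTop.comp
    ((tendsto_log_atTop.comp tendsto_natCast_atTop_atTop).const_mul_atTop two_pos)).const_mul_atTop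
      hσ

lemma natCast_mul_gaussianPDFReal_mul_sqrt_two_mul_log {σ : ℝ} (hσ : 0 < σ) {d : ℕ}
    (hd : 0 < d) :
    d * gaussianPDFReal 0 ⟨σ ^ 2, sq_nonneg σ⟩ (σ * √(2 * log d)) = (√(2 * π * σ ^ 2))⁻¹ := by
  have hd' : (0 : ℝ) < d := by exact_mod_cast hd
  have hexp : -(σ * √(2 * log d) - 0) ^ 2 / (2 * σ ^ 2) = -log d := by
    rw [sub_zero, mul_pow, sq_sqrt (by have := log_natCast_nonneg d; positivity)]
    field_simp
  change (d : ℝ) * ((√(2 * π * σ ^ 2))⁻¹ *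
    exp (-(σ * √(2 * log d) - 0) ^ 2 / (2 * σ ^ 2))) = _
  rw [hexp, exp_neg, exp_log hd']
  field_simp

lemma tendsto_gaussianReal_Iio_pow {σ c : ℝ} (hσ : 0 < σ) (hc0 : 0 ≤ c) (hc1 : c < 1) :
    Tendsto (fun d : ℕ =>
      (gaussianReal 0 ⟨σ ^ 2, sq_nonneg σ⟩).real (Iio (c * (σ * √(2 * log d)))) ^ d)
      atTop (𝓝 0) := by
  have hv : (⟨σ ^ 2, sq_nonneg σ⟩ : ℝ≥0) ≠ 0 :=
    (show (0 : ℝ≥0) < ⟨σ ^ 2, _⟩ from pow_pos hσ 2).ne'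
  -- instance search does not unfold the anonymous constructor of the variance
  have : IsProbabilityMeasure (gaussianReal 0 ⟨σ ^ 2, sq_nonneg σ⟩) :=
    instIsProbabilityMeasureGaussianReal _ _
  refine tendsto_pow_zero_of_tendsto_mul_one_sub_atTop (fun d => measureReal_nonneg) ?_
  refine tendsto_atTop_mono' atTop ?_
    ((tendsto_mul_sqrt_two_mul_log_atTop hσ).const_mul_atTop
      (by positivity : 0 < (1 - c) * (√(2 * π * σ ^ 2))⁻¹))
  filter_upwards [eventually_gt_atTop 0] with d hd
  set s := σ * √(2 * log d)
  have hs : 0 ≤ s := by positivity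
  calc (1 - c) * (√(2 * π * σ ^ 2))⁻¹ * s
      = d * ((s - c * s) * gaussianPDFReal 0 ⟨σ ^ 2, sq_nonneg σ⟩ s) := by
        rw [← natCast_mul_gaussianPDFReal_mul_sqrt_two_mul_log hσ hd]; ring
    _ ≤ d * (gaussianReal 0 ⟨σ ^ 2, sq_nonneg σ⟩).real (Icc (c * s) s) := by
        gcongr
        exact mul_gaussianPDFReal_le_gaussianReal_Icc hv (by positivity)
          (mul_le_of_le_one_left hs hc1.le)
    _ ≤ d * (1 - (gaussianReal 0 ⟨σ ^ 2, sq_nonneg σ⟩).real (Iio (c * s))) := by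
        rw [← probReal_compl_eq_one_sub measurableSet_Iio, compl_Iio]
        gcongr
        exacts [measure_ne_top _ _, Icc_subset_Ici_self]

lemma integral_iSup_le_of_map_eq_gaussianReal {ι Ω : Type*} [Fintype ι] [Nonempty ι]
    [MeasurableSpace Ω] {μ : Measure Ω} [IsProbabilityMeasure μ] {σ : ℝ} (hσ : 0 < σ)
    {X : ι → Ω → ℝ} (hX : ∀ i, Measurable (X i))
    (hlaw : ∀ i, μ.map (X i) = gaussianReal 0 ⟨σ ^ 2, sq_nonneg σ⟩) (hι : 1 < Fintype.card ι) :
    ∫ ω, ⨆ i, X i ω ∂μ ≤ σ * √(2 * log (Fintype.card ι)) := by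
  refine (integral_iSup_le_of_hasSubgaussianMGF (pow_pos hσ 2) hι fun i =>
    hasSubgaussianMGF_of_map_eq_gaussianReal (hX i).aemeasurable (hlaw i)).trans_eq ?_
  change √(2 * σ ^ 2 * log (Fintype.card ι)) = σ * √(2 * log (Fintype.card ι))
  rw [mul_comm 2, mul_assoc, sqrt_mul (sq_nonneg σ), sqrt_sq hσ.le]

lemma eventually_lt_integral_iSup_div {Ω : Type*} [MeasurableSpace Ω] {μ : Measure Ω}
    [IsProbabilityMeasure μ] {σ : ℝ} (hσ : 0 < σ) {X : ℕ → Ω → ℝ} (hX : ∀ i, Measurable (X i))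
    (hlaw : ∀ i, μ.map (X i) = gaussianReal 0 ⟨σ ^ 2, sq_nonneg σ⟩) (hindep : iIndepFun X μ)
    {a : ℝ} (ha : a < 1) :
    ∀ᶠ d : ℕ in atTop, a < (∫ ω, ⨆ i : Fin d, X i ω ∂μ) / (σ * √(2 * log d)) := by
  set s : ℕ → ℝ := fun d => σ * √(2 * log d)
  have hs : Tendsto s atTop atTop := tendsto_mul_sqrt_two_mul_log_atTop hσ
  obtain ⟨c, hac, hc1⟩ := exists_between (max_lt ha one_pos)
  have hc0 : 0 ≤ c := (le_max_right a 0).trans hac.le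
  set B := ∫ ω, |X 0 ω| ∂μ
  have hlim : Tendsto (fun d : ℕ => c * (1 - (gaussianReal 0 ⟨σ ^ 2, sq_nonneg σ⟩).real
      (Iio (c * s d)) ^ d) - B * (s d)⁻¹) atTop (𝓝 c) := by
    simpa only [sub_zero, mul_one, mul_zero, Function.comp_apply] using
      (((tendsto_gaussianReal_Iio_pow hσ hc0 hc1).const_sub 1).const_mul c).sub
        ((tendsto_inv_atTop_zero.comp hs).const_mul B)
  filter_upwards [hlim.eventually_const_lt ((le_max_left a 0).trans_lt hac),
    eventually_gt_atTop 0, hs.eventually_gt_atTop 0] with d hlt hd hsd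
  have : NeZero d := ⟨hd.ne'⟩
  have hmax := mul_one_sub_pow_le_integral_iSup_add (fun i : Fin d => hX i)
    (fun i => (hasSubgaussianMGF_of_map_eq_gaussianReal (hX i).aemeasurable (hlaw i)).integrable)
    (hindep.precomp Fin.val_injective) (fun i => hlaw i) ⟨0, hd⟩ (c * s d)
  rw [Fintype.card_fin] at hmax
  refine hlt.trans_le ?_
  rw [le_div_iff₀ hsd, sub_mul, inv_mul_cancel_right₀ hsd.ne']
  linarith

/-- For an i.i.d. sequence of `N(0, σ²)` Gaussian random variables with
`σ > 0`, the ratio `E[max_{1 ≤ i ≤ d} X_i] / (σ·√(2 ln d))` tends to `1` as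
`d → ∞`. -/
theorem expected_max_gaussians_ratio_tendsto_one {Ω : Type*} [MeasurableSpace Ω]
    (μ : Measure Ω) [IsProbabilityMeasure μ]
    (σ : ℝ) (hσ : 0 < σ) (X : ℕ → Ω → ℝ) (hX : ∀ i, Measurable (X i))
    (hlaw : ∀ i, μ.map (X i) = gaussianReal 0 ⟨σ ^ 2, sq_nonneg σ⟩)
    (hindep : iIndepFun X μ) :
    Tendsto (fun d : ℕ =>
        (∫ ω, ⨆ i : Fin d, X i ω ∂μ) / (σ * Real.sqrt (2 * Real.log d)))
      atTop (nhds 1) := by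
  refine tendsto_order.2 ⟨fun a ha => eventually_lt_integral_iSup_div hσ hX hlaw hindep ha,
    fun b hb => ?_⟩
  filter_upwards [eventually_gt_atTop 1,
    (tendsto_mul_sqrt_two_mul_log_atTop hσ).eventually_gt_atTop 0] with d hd hsd
  have : NeZero d := ⟨by omega⟩
  have hmax := integral_iSup_le_of_map_eq_gaussianReal hσ (fun i : Fin d => hX i)
    (fun i => hlaw i) (by rwa [Fintype.card_fin])
  rw [Fintype.card_fin] at hmax
  exact ((div_le_one hsd).2 hmax).trans_lt hb
end
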